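/- Let α be an expanding algebraic number (an algebraic number all of whose conjugates, including α itself, have modulus greater than 1), R a complete residue system mod α in ℤ[α], and J the associated backward division map. Then ℤ[α] = R[α] and 0 ∈ R hold if and only if ℘ = {0}. -/

import Mathlib

/-!
If `0 ∈ R`, then `J` strips the lowest digit off a finite `R`-expansion, so the orbit of any
element of `R[α]` reaches the fixed point `0`; a periodic element of `R[α] = ℤ[α]` is then `0`.

Conversely, every orbit `w n = J^[n] β` is finite. In `K = ℚ(α)` we have
`w n = r n + α * w (n + 1)` with digits from the finite set `R`. Since every conjugate of `α`
has modulus `> 1`, all conjugates of `w n` stay bounded. At a finite place `v`, either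
`v(α) ≤ 1`, so that all of `ℤ[α]` is `v`-integral, or `v(α) > 1`, and then dividing by `α`
creates no new denominator. So a fixed integer multiple of the orbit consists of algebraic
integers with bounded conjugates, which form a finite set. Hence every orbit runs into a cycle.
If `℘ = {0}`, this cycle is `0`, `J 0 = 0` forces `0 ∈ R`, and reading the digits off the orbit
gives an `R`-expansion.
-/

open Polynomial

/-- `ℤ[α]`: the set of values `P(α)` for `P ∈ ℤ[x]`. -/
def Zadj (α : ℂ) : Set ℂ := {z | ∃ P : ℤ[X], aeval α P = z}

/-- `F[α]`: the set of all sums `Σ_{j=0}^{n} f_j α^j` with `n ∈ ℕ` and `f_0, …, f_n ∈ F`. -/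
def repSet (α : ℂ) (F : Set ℂ) : Set ℂ :=
  {z | ∃ (n : ℕ) (f : ℕ → ℂ), (∀ j ≤ n, f j ∈ F) ∧
    z = ∑ j ∈ Finset.range (n + 1), f j * α ^ j}

def IsCRS (α : ℂ) (R : Set ℂ) : Prop :=
  R ⊆ Zadj α ∧ ∀ β ∈ Zadj α, ∃! r, r ∈ R ∧ ∃ γ ∈ Zadj α, β - r = α * γ

def IsJmap (α : ℂ) (R : Set ℂ) (J : ℂ → ℂ) : Prop :=
  ∀ β ∈ Zadj α, J β ∈ Zadj α ∧ ∃ r ∈ R, β = r + α * J β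

/-- `℘`: the set of periodic elements of `ℤ[α]` under `J`. -/
def perSet (α : ℂ) (J : ℂ → ℂ) : Set ℂ :=
  {β ∈ Zadj α | ∃ n : ℕ, 1 ≤ n ∧ J^[n] β = β}

def EvPeriodic (J : ℂ → ℂ) (β : ℂ) : Prop :=
  ∃ (k m : ℕ), 1 ≤ m ∧ J^[k + m] β = J^[k] β

open NumberField IsDedekindDomain

theorem aeval_eq_coeff_zero_add_mul_divX {R A : Type*} [CommSemiring R] [CommSemiring A]
    [Algebra R A] (P : R[X]) (x : A) :
    aeval x P = algebraMap R A (P.coeff 0) + x * aeval x P.divX := by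
  conv_lhs => rw [← X_mul_divX_add P]
  rw [map_add, map_mul, aeval_X, aeval_C, add_comm]

theorem Function.eq_of_mem_periodicPts_of_iterate_eq {α : Type*} {f : α → α} {x y : α} {m : ℕ}
    (hx : x ∈ periodicPts f) (hy : IsFixedPt f y) (hxy : f^[m] x = y) : x = y := by
  obtain ⟨n, hn, hxn⟩ := mem_periodicPts.1 hx
  calc x = f^[m * n - m + m] x := by
        rw [Nat.sub_add_cancel (Nat.le_mul_of_pos_right m hn), (hxn.const_mul m).eq]
    _ = y := by rw [iterate_add_apply, hxy, (hy.iterate _).eq]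

theorem Valuation.le_one_of_mem_adjoin_int {A Γ₀ : Type*} [CommRing A]
    [LinearOrderedCommGroupWithZero Γ₀] (v : Valuation A Γ₀) {a x : A} (ha : v a ≤ 1)
    (hx : x ∈ Algebra.adjoin ℤ {a}) : v x ≤ 1 :=
  Algebra.adjoin_le (S := subalgebraOfSubring v.integer) (Set.singleton_subset_iff.2 ha) hx

theorem Valuation.le_one_of_sub_mul_succ_le_one {A Γ₀ : Type*} [CommRing A]
    [LinearOrderedCommGroupWithZero Γ₀] (v : Valuation A Γ₀) {a : A} {x : ℕ → A}
    (hx : ∀ n, x n ∈ Algebra.adjoin ℤ {a}) (h0 : v (x 0) ≤ 1)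
    (hstep : ∀ n, v (x n - a * x (n + 1)) ≤ 1) (n : ℕ) : v (x n) ≤ 1 := by
  rcases le_or_gt (v a) 1 with ha | ha
  · exact v.le_one_of_mem_adjoin_int ha (hx n)
  induction n with
  | zero => exact h0
  | succ n ih =>
    have hmul : v a * v (x (n + 1)) ≤ 1 := by
      rw [← map_mul, ← sub_sub_cancel (x n) (a * x (n + 1))]
      exact v.map_sub_le ih (hstep n)
    by_contra! hlt
    exact (ha.trans_le (le_mul_of_one_le_right' hlt.le)).not_ge hmul

theorem norm_le_max_of_norm_sub_mul_succ_le {𝕜 : Type*} [NormedDivisionRing 𝕜] {c : 𝕜}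
    {z : ℕ → 𝕜} {M : ℝ} (hc : 1 < ‖c‖) (hM : ∀ n, ‖z n - c * z (n + 1)‖ ≤ M) (n : ℕ) :
    ‖z n‖ ≤ max ‖z 0‖ (M / (‖c‖ - 1)) := by
  set B := max ‖z 0‖ (M / (‖c‖ - 1))
  have hMB : M ≤ (‖c‖ - 1) * B := by
    rw [← div_le_iff₀' (by linarith)]
    exact le_max_right _ _
  induction n with
  | zero => exact le_max_left _ _
  | succ n ih =>
    have : ‖c‖ * ‖z (n + 1)‖ ≤ ‖c‖ * B := calc
      ‖c‖ * ‖z (n + 1)‖ = ‖z n - (z n - c * z (n + 1))‖ := by rw [sub_sub_cancel, norm_mul]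
      _ ≤ B + M := (norm_sub_le _ _).trans (add_le_add ih (hM n))
      _ ≤ ‖c‖ * B := by linarith
    exact le_of_mul_le_mul_left this (by linarith)

namespace NumberField

variable {K : Type*} [Field K] [NumberField K]

theorem isIntegral_iff_forall_valuation_le_one {x : K} :
    IsIntegral ℤ x ↔ ∀ v : HeightOneSpectrum (𝓞 K), v.valuation K x ≤ 1 := by
  refine ⟨fun hx v => v.valuation_le_one (⟨x, hx⟩ : 𝓞 K), fun h => ?_⟩
  obtain ⟨y, rfl⟩ := HeightOneSpectrum.mem_integers_of_valuation_le_one K x h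
  exact RingOfIntegers.isIntegral_coe y

theorem finite_range_of_sub_mul_succ_mem {a : K} (ha : ∀ φ : K →+* ℂ, 1 < ‖φ a‖) {D : Set K}
    (hD : D.Finite) {w : ℕ → K} (hw : ∀ n, w n ∈ Algebra.adjoin ℤ {a})
    (hwD : ∀ n, w n - a * w (n + 1) ∈ D) : (Set.range w).Finite := by
  classical
  have : Algebra.IsAlgebraic ℤ K :=
    IsFractionRing.comap_isAlgebraic_iff (K := ℚ) |>.mpr inferInstance
  obtain ⟨N, hN0, hN⟩ := Algebra.IsAlgebraic.exists_integral_multiples ℤ (insert (w 0) hD.toFinset)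
  have hint (n : ℕ) : IsIntegral ℤ (N • w n) := by
    refine isIntegral_iff_forall_valuation_le_one.2 fun v =>
      (v.valuation K).le_one_of_sub_mul_succ_le_one (x := (N • w ·)) (fun n => zsmul_mem (hw n) N)
        (isIntegral_iff_forall_valuation_le_one.1 (hN _ (by simp)) v) (fun n => ?_) n
    rw [mul_smul_comm, ← smul_sub]
    exact isIntegral_iff_forall_valuation_le_one.1 (hN _ (by simp [hwD n])) v
  have hbound : ∃ C, ∀ (φ : K →+* ℂ) n, ‖φ (w n)‖ ≤ C := by
    have (φ : K →+* ℂ) : ∃ B, ∀ n, ‖φ (w n)‖ ≤ B := by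
      obtain ⟨M, hM⟩ := (hD.image fun d => ‖φ d‖).bddAbove
      exact ⟨_, norm_le_max_of_norm_sub_mul_succ_le (ha φ) fun n => by
        rw [← map_mul, ← map_sub]; exact hM ⟨_, hwD n, rfl⟩⟩
    choose B hB using this
    obtain ⟨C, hC⟩ := (Set.finite_range B).bddAbove
    exact ⟨C, fun φ n => (hB φ n).trans (hC ⟨φ, rfl⟩)⟩
  obtain ⟨C, hC⟩ := hbound
  refine Set.Finite.of_finite_image ?_ (smul_right_injective K hN0).injOn
  refine (Embeddings.finite_of_norm_le K ℂ (‖(N : ℂ)‖ * C)).subset ?_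
  rintro _ ⟨_, ⟨n, rfl⟩, rfl⟩
  refine ⟨hint n, fun φ => ?_⟩
  rw [map_zsmul, zsmul_eq_mul, norm_mul]
  gcongr
  exact hC φ n

end NumberField

theorem Zadj_map {K : Type*} [CommRing K] (f : K →+* ℂ) (a : K) :
    Zadj (f a) = f '' Algebra.adjoin ℤ {a} := by
  ext z
  have (P : ℤ[X]) : aeval (f a) P = f (aeval a P) := aeval_algHom_apply f.toIntAlgHom a P
  simp [Zadj, Algebra.adjoin_singleton_eq_range_aeval, this]

theorem Zadj_eq_adjoin (α : ℂ) : Zadj α = Algebra.adjoin ℤ {α} := by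
  simpa using Zadj_map (RingHom.id ℂ) α

/-- Its carrier is `Zadj α` definitionally, so its closure lemmas apply to `Zadj α` directly. -/
def zadjSubring (α : ℂ) : Subring ℂ :=
  (Algebra.adjoin ℤ {α}).toSubring.copy (Zadj α) (Zadj_eq_adjoin α)

section Zadj

variable {α : ℂ} {F : Set ℂ}

theorem self_mem_Zadj (α : ℂ) : α ∈ Zadj α := ⟨X, aeval_X α⟩

theorem sum_mul_pow_mem_Zadj {f : ℕ → ℂ} {n : ℕ} (hf : ∀ j < n, f j ∈ Zadj α) :
    ∑ j ∈ Finset.range n, f j * α ^ j ∈ Zadj α :=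
  (zadjSubring α).sum_mem fun j hj => (zadjSubring α).mul_mem (hf j (Finset.mem_range.1 hj))
    ((zadjSubring α).pow_mem (self_mem_Zadj α) j)

theorem exists_intCast_sub_eq_mul {z : ℂ} (hz : z ∈ Zadj α) :
    ∃ c : ℤ, ∃ γ ∈ Zadj α, z - c = α * γ := by
  obtain ⟨P, rfl⟩ := hz
  refine ⟨P.coeff 0, aeval α P.divX, ⟨_, rfl⟩, ?_⟩
  rw [aeval_eq_coeff_zero_add_mul_divX, eq_intCast, add_sub_cancel_left]

theorem exists_intCast_ne_zero_eq_mul (hα : IsAlgebraic ℤ α) (hα0 : α ≠ 0) :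
    ∃ a : ℤ, a ≠ 0 ∧ ∃ q ∈ Zadj α, (a : ℂ) = α * q := by
  obtain ⟨P, hP0, hP⟩ := hα
  obtain ⟨Q, hPQ, hXQ⟩ := P.exists_eq_pow_rootMultiplicity_mul_and_not_dvd hP0 0
  rw [hPQ, map_mul] at hP
  have hQ : aeval α Q = 0 := by simpa [hα0] using hP
  refine ⟨Q.coeff 0, by simpa [X_dvd_iff] using hXQ, -aeval α Q.divX, ⟨-Q.divX, by simp⟩, ?_⟩
  have := aeval_eq_coeff_zero_add_mul_divX Q α
  rw [hQ, eq_intCast] at this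
  linear_combination -this

theorem repSet_subset_Zadj (hF : F ⊆ Zadj α) : repSet α F ⊆ Zadj α := by
  rintro _ ⟨n, f, hf, rfl⟩
  exact sum_mul_pow_mem_Zadj fun j hj => hF (hf j (Nat.lt_succ_iff.1 hj))

theorem zero_mem_repSet (h : (0 : ℂ) ∈ F) : (0 : ℂ) ∈ repSet α F :=
  ⟨0, fun _ => 0, fun _ _ => h, by simp⟩

theorem add_mul_mem_repSet {r y : ℂ} (hr : r ∈ F) (hy : y ∈ repSet α F) :
    r + α * y ∈ repSet α F := by
  obtain ⟨n, f, hf, rfl⟩ := hy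
  refine ⟨n + 1, fun | 0 => r | j + 1 => f j, fun | 0, _ => hr | j + 1, hj => hf j (by omega), ?_⟩
  rw [Finset.sum_range_succ' _ (n + 1), Finset.mul_sum, add_comm]
  simp only [pow_succ, pow_zero, mul_one]
  exact congrArg (· + r) (Finset.sum_congr rfl fun j _ => by ring)

end Zadj

theorem perSet_eq_inter (α : ℂ) (J : ℂ → ℂ) :
    perSet α J = Zadj α ∩ Function.periodicPts J := by
  ext β
  simp [perSet, Function.mem_periodicPts, Nat.one_le_iff_ne_zero, Nat.pos_iff_ne_zero,
    Function.IsPeriodicPt, Function.IsFixedPt]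

theorem evPeriodic_of_finite_range {J : ℂ → ℂ} {β : ℂ}
    (h : (Set.range fun n => J^[n] β).Finite) : EvPeriodic J β := by
  obtain ⟨a, b, hab, heq⟩ :=
    h.exists_lt_map_eq_of_forall_mem (Set.mem_range_self (f := fun n => J^[n] β))
  exact ⟨a, b - a, Nat.sub_pos_of_lt hab, by rw [Nat.add_sub_cancel' hab.le, heq]⟩

theorem EvPeriodic.exists_iterate_mem_periodicPts {J : ℂ → ℂ} {β : ℂ} (h : EvPeriodic J β) :
    ∃ k, J^[k] β ∈ Function.periodicPts J := by
  obtain ⟨k, m, hm, hkm⟩ := h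
  refine ⟨k, Function.mk_mem_periodicPts hm ?_⟩
  rwa [Function.IsPeriodicPt, Function.IsFixedPt, ← Function.iterate_add_apply, add_comm]

namespace IsCRS

variable {α : ℂ} {R : Set ℂ}

theorem eq_of_sub_eq_mul (hR : IsCRS α R) {r s γ : ℂ} (hr : r ∈ R) (hs : s ∈ R)
    (hγ : γ ∈ Zadj α) (h : r - s = α * γ) : r = s := by
  obtain ⟨t, -, ht⟩ := hR.2 r (hR.1 hr)
  exact (ht r ⟨hr, 0, (zadjSubring α).zero_mem, by simp⟩).trans (ht s ⟨hs, γ, hγ, h⟩).symm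

/-- Every residue class mod `α` contains an integer, and the integers mod `α` have
finitely many classes because some nonzero integer `a` lies in `αℤ[α]`. -/
theorem finite (hR : IsCRS α R) (hα : IsAlgebraic ℤ α) (hα0 : α ≠ 0) : R.Finite := by
  obtain ⟨a, ha0, q, hq, haq⟩ := exists_intCast_ne_zero_eq_mul hα hα0
  have (r : ℂ) (hr : r ∈ R) : ∃ k ∈ Set.Ico 0 (a.natAbs : ℤ), ∃ γ ∈ Zadj α, r - k = α * γ := by
    obtain ⟨c, γ, hγ, hc⟩ := exists_intCast_sub_eq_mul (hR.1 hr)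
    refine ⟨c % a, ⟨Int.emod_nonneg c ha0, Int.emod_lt c ha0⟩, γ + q * (c / a : ℤ),
      (zadjSubring α).add_mem hγ ((zadjSubring α).mul_mem hq (intCast_mem (zadjSubring α) _)), ?_⟩
    have hca : ((c % a : ℤ) : ℂ) = c - a * (c / a : ℤ) := by
      rw [eq_sub_iff_add_eq, add_comm]; exact_mod_cast Int.mul_ediv_add_emod c a
    rw [hca, haq]
    linear_combination hc
  choose! k hk γ hγ hkγ using this
  refine Set.Finite.of_finite_image
    ((Set.finite_Ico 0 (a.natAbs : ℤ)).subset (Set.image_subset_iff.2 hk)) ?_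
  intro r hr s hs hrs
  refine hR.eq_of_sub_eq_mul hr hs ((zadjSubring α).sub_mem (hγ r hr) (hγ s hs)) ?_
  linear_combination hkγ r hr - hkγ s hs + congrArg (fun n : ℤ => (n : ℂ)) hrs

end IsCRS

namespace IsJmap

variable {α : ℂ} {R : Set ℂ} {J : ℂ → ℂ}

theorem mapsTo (hJ : IsJmap α R J) : Set.MapsTo J (Zadj α) (Zadj α) := fun β hβ => (hJ β hβ).1

theorem sub_mul_apply_mem (hJ : IsJmap α R J) {β : ℂ} (hβ : β ∈ Zadj α) : β - α * J β ∈ R := by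
  obtain ⟨-, r, hr, h⟩ := hJ β hβ
  rwa [sub_eq_of_eq_add h]

theorem apply_eq (hR : IsCRS α R) (hJ : IsJmap α R J) (hα0 : α ≠ 0) {β r γ : ℂ}
    (hβ : β ∈ Zadj α) (hr : r ∈ R) (hγ : γ ∈ Zadj α) (h : β = r + α * γ) : J β = γ := by
  obtain ⟨hJβ, s, hs, hβs⟩ := hJ β hβ
  obtain rfl : r = s := hR.eq_of_sub_eq_mul hr hs ((zadjSubring α).sub_mem hJβ hγ)
    (by linear_combination hβs - h)
  exact mul_left_cancel₀ hα0 (add_left_cancel (hβs.symm.trans h))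

theorem isFixedPt_zero (hR : IsCRS α R) (hJ : IsJmap α R J) (hα0 : α ≠ 0) (h0 : (0 : ℂ) ∈ R) :
    Function.IsFixedPt J 0 :=
  hJ.apply_eq hR hα0 (zadjSubring α).zero_mem h0 (zadjSubring α).zero_mem (by simp)

theorem iterate_sum_mul_pow_eq_zero (hR : IsCRS α R) (hJ : IsJmap α R J) (hα0 : α ≠ 0)
    {f : ℕ → ℂ} {n : ℕ} (hf : ∀ j < n, f j ∈ R) :
    J^[n] (∑ j ∈ Finset.range n, f j * α ^ j) = 0 := by
  induction n generalizing f with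
  | zero => simp
  | succ n ih =>
    have hsum : ∑ j ∈ Finset.range (n + 1), f j * α ^ j =
        f 0 + α * ∑ j ∈ Finset.range n, f (j + 1) * α ^ j := by
      rw [Finset.sum_range_succ', Finset.mul_sum, add_comm]
      simp only [pow_succ, pow_zero, mul_one]
      exact congrArg (f 0 + ·) (Finset.sum_congr rfl fun j _ => by ring)
    have hdigits : ∀ j < n, f (j + 1) ∈ R := fun j hj => hf (j + 1) (by omega)
    rw [Function.iterate_succ_apply, hJ.apply_eq hR hα0
      (sum_mul_pow_mem_Zadj fun j hj => hR.1 (hf j hj)) (hf 0 n.succ_pos)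
      (sum_mul_pow_mem_Zadj fun j hj => hR.1 (hdigits j hj)) hsum]
    exact ih hdigits

theorem exists_iterate_eq_zero_of_mem_repSet (hR : IsCRS α R) (hJ : IsJmap α R J) (hα0 : α ≠ 0)
    {β : ℂ} (hβ : β ∈ repSet α R) : ∃ n, J^[n] β = 0 := by
  obtain ⟨n, f, hf, rfl⟩ := hβ
  exact ⟨n + 1, hJ.iterate_sum_mul_pow_eq_zero hR hα0 fun j hj => hf j (by omega)⟩

theorem mem_repSet_of_iterate_eq_zero (hJ : IsJmap α R J) (h0 : (0 : ℂ) ∈ R) {n : ℕ} {β : ℂ}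
    (hβ : β ∈ Zadj α) (h : J^[n] β = 0) : β ∈ repSet α R := by
  induction n generalizing β with
  | zero =>
    obtain rfl : β = 0 := h
    exact zero_mem_repSet h0
  | succ n ih =>
    obtain ⟨hJβ, r, hr, hβr⟩ := hJ β hβ
    exact hβr ▸ add_mul_mem_repSet hr (ih hJβ h)

theorem evPeriodic (hα : IsAlgebraic ℚ α) (hexp : ∀ z : ℂ, aeval z (minpoly ℚ α) = 0 → 1 < ‖z‖)
    (hRfin : R.Finite) (hJ : IsJmap α R J) {β : ℂ} (hβ : β ∈ Zadj α) : EvPeriodic J β := by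
  let K := IntermediateField.adjoin ℚ {α}
  have : FiniteDimensional ℚ K := IntermediateField.adjoin.finiteDimensional hα.isIntegral
  have : NumberField K := ⟨⟩
  let a := IntermediateField.AdjoinSimple.gen ℚ α
  let ι : K →+* ℂ := algebraMap K ℂ
  have ha (φ : K →+* ℂ) : 1 < ‖φ a‖ := by
    refine hexp _ ?_
    have := aeval_algHom_apply φ.toRatAlgHom a (minpoly ℚ a)
    rwa [minpoly.aeval, map_zero,
      show minpoly ℚ a = minpoly ℚ α from IntermediateField.minpoly_gen (F := ℚ) α] at this
  choose w hw hιw using fun n => Zadj_map ι a ▸ hJ.mapsTo.iterate n hβ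
  have hwR (n : ℕ) : w n - a * w (n + 1) ∈ ι ⁻¹' R := by
    have := hJ.sub_mul_apply_mem (hJ.mapsTo.iterate n hβ)
    rwa [← Function.iterate_succ_apply' J, ← hιw, ← hιw] at this
  have hfin := finite_range_of_sub_mul_succ_mem ha (hRfin.preimage ι.injective.injOn) hw hwR
  refine evPeriodic_of_finite_range ?_
  rw [show (fun n => J^[n] β) = ι ∘ w from funext fun n => (hιw n).symm, Set.range_comp]
  exact hfin.image ι

end IsJmap

/-- Corollary 2 (iv): for an expanding algebraic number `α`, a CRS `R` and the associated
map `J`, `(α, R)` is a number system (i.e. `ℤ[α] = R[α]` and `0 ∈ R`) iff `℘ = {0}`. -/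
theorem number_system_iff_perSet_eq_zero (α : ℂ) (hα : IsAlgebraic ℚ α)
    (hexp : ∀ z : ℂ, aeval z (minpoly ℚ α) = 0 → 1 < ‖z‖)
    (R : Set ℂ) (hR : IsCRS α R) (J : ℂ → ℂ) (hJ : IsJmap α R J) :
    (repSet α R = Zadj α ∧ (0 : ℂ) ∈ R) ↔ perSet α J = {0} := by
  have hα0 : α ≠ 0 := norm_pos_iff.1 (one_pos.trans (hexp α (minpoly.aeval ℚ α)))
  rw [perSet_eq_inter]
  constructor
  · rintro ⟨hrep, h0⟩
    have hfix := hJ.isFixedPt_zero hR hα0 h0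
    refine Set.eq_singleton_iff_unique_mem.2
      ⟨⟨(zadjSubring α).zero_mem, Function.mk_mem_periodicPts one_pos (hfix.isPeriodicPt 1)⟩, ?_⟩
    rintro β ⟨hβ, hper⟩
    obtain ⟨n, hn⟩ := hJ.exists_iterate_eq_zero_of_mem_repSet hR hα0 (hrep ▸ hβ)
    exact Function.eq_of_mem_periodicPts_of_iterate_eq hper hfix hn
  · intro hper
    have hper0 : ∀ β ∈ Zadj α, β ∈ Function.periodicPts J → β = 0 := fun β hβ hβp =>
      Set.eq_of_mem_singleton (hper ▸ ⟨hβ, hβp⟩)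
    obtain ⟨-, h0⟩ : (0 : ℂ) ∈ Zadj α ∩ Function.periodicPts J := hper ▸ rfl
    have hJ0 : J 0 = 0 := hper0 _ (hJ.mapsTo (zadjSubring α).zero_mem)
      ((Function.Commute.refl J).mapsTo_periodicPts h0)
    have hR0 : (0 : ℂ) ∈ R := by simpa [hJ0] using hJ.sub_mul_apply_mem (zadjSubring α).zero_mem
    refine ⟨(repSet_subset_Zadj hR.1).antisymm fun β hβ => ?_, hR0⟩
    have hRfin := hR.finite ((IsFractionRing.isAlgebraic_iff ℤ ℚ ℂ).mpr hα) hα0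
    obtain ⟨k, hk⟩ := (hJ.evPeriodic hα hexp hRfin hβ).exists_iterate_mem_periodicPts
    exact hJ.mem_repSet_of_iterate_eq_zero hR0 hβ (hper0 _ (hJ.mapsTo.iterate k hβ) hk)
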